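/- Let X and Y be real Hilbert spaces, let A : X → X, C : X → Y and K : Y → X be bounded linear operators, and let T > 0. Assume ‖exp(sA)‖ ≤ 1 for all s ∈ [0,T]. Then for every x ∈ X and every t ∈ [0,T], ‖C (exp(tA) x) − C (exp(t(A − K∘C)) x)‖_Y ≤ ‖C‖·‖K‖·√t · (∫₀^t ‖C (exp(s(A − K∘C)) x)‖²_Y ds)^{1/2}. -/

import Mathlib

/-!
Duhamel's formula writes `exp (t • A) x - exp (t • B) x` as the integral over `[0, t]` of
`exp ((t - s) • A) ((A - B) (exp (s • B) x))`. With `B = A - K ∘L C` and `exp (s • A)` contractive,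
the integrand has norm at most `‖K‖ * ‖C (exp (s • B) x)‖`, and Cauchy–Schwarz on `[0, t]`
bounds the resulting integral by `√t` times the `L²` norm.
-/

open MeasureTheory NormedSpace

theorem integral_le_sqrt_measureReal_univ_mul_sqrt_integral_sq {α : Type*} [MeasurableSpace α]
    {μ : Measure α} [IsFiniteMeasure μ] {f : α → ℝ} (hf_nonneg : 0 ≤ᵐ[μ] f) (hf : MemLp f 2 μ) :
    ∫ a, f a ∂μ ≤ √(μ.real Set.univ) * √(∫ a, f a ^ 2 ∂μ) := by
  have hpq : (2 : ℝ).HolderConjugate 2 := .two_two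
  have h := integral_mul_le_Lp_mul_Lq_of_nonneg hpq hf_nonneg
    (by filter_upwards with a using zero_le_one) (by simpa using hf) (memLp_const (1 : ℝ))
  simp only [mul_one, integral_const, smul_eq_mul, Real.rpow_two] at h
  rw [Real.sqrt_eq_rpow, Real.sqrt_eq_rpow, mul_comm]
  simpa using h

theorem intervalIntegral_le_sqrt_mul_sqrt_intervalIntegral_sq {f : ℝ → ℝ} {t : ℝ} (ht : 0 ≤ t)
    (hf : ContinuousOn f (Set.Icc 0 t)) (hf_nonneg : ∀ s ∈ Set.Icc 0 t, 0 ≤ f s) :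
    ∫ s in 0..t, f s ≤ √t * √(∫ s in 0..t, f s ^ 2) := by
  obtain ⟨M, hM⟩ := isCompact_Icc.exists_bound_of_continuousOn hf
  have hIoc : ∀ᵐ s ∂volume.restrict (Set.Ioc 0 t), s ∈ Set.Icc 0 t :=
    (ae_restrict_iff' measurableSet_Ioc).2 (.of_forall fun _ hs => Set.Ioc_subset_Icc_self hs)
  have hmem : MemLp f 2 (volume.restrict (Set.Ioc 0 t)) :=
    .of_bound ((hf.mono Set.Ioc_subset_Icc_self).aestronglyMeasurable measurableSet_Ioc) M
      (by filter_upwards [hIoc] with s hs using hM s hs)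
  have h := integral_le_sqrt_measureReal_univ_mul_sqrt_integral_sq
    (by filter_upwards [hIoc] with s hs using hf_nonneg s hs) hmem
  simpa [intervalIntegral.integral_of_le ht, Real.volume_real_Ioc_of_le ht] using h

section Duhamel

variable {E : Type*} [NormedAddCommGroup E] [NormedSpace ℝ E] [CompleteSpace E]

theorem continuous_exp_smul (A : E →L[ℝ] E) : Continuous fun s : ℝ => exp (s • A) :=
  continuous_iff_continuousAt.2 fun s => (hasDerivAt_exp_smul_const A s).continuousAt

theorem hasDerivAt_exp_smul_sub_apply_exp_smul_apply (A B : E →L[ℝ] E) (t s : ℝ) (x : E) :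
    HasDerivAt (fun u : ℝ => exp ((t - u) • A) (exp (u • B) x))
      (-exp ((t - s) • A) ((A - B) (exp (s • B) x))) s := by
  have hA : HasDerivAt (fun u : ℝ => exp ((t - u) • A)) (-(exp ((t - s) • A) * A)) s := by
    simpa [Function.comp_def] using
      (hasDerivAt_exp_smul_const A (t - s)).scomp s ((hasDerivAt_id s).const_sub t)
  have hB : HasDerivAt (fun u : ℝ => exp (u • B) x) (B (exp (s • B) x)) s := by
    simpa using (hasDerivAt_exp_smul_const' B s).clm_apply (hasDerivAt_const s x)
  convert hA.clm_apply hB using 1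
  simp [sub_eq_add_neg, add_comm]

theorem exp_smul_apply_sub_exp_smul_apply_eq_intervalIntegral (A B : E →L[ℝ] E) (t : ℝ) (x : E) :
    exp (t • A) x - exp (t • B) x =
      ∫ s in 0..t, exp ((t - s) • A) ((A - B) (exp (s • B) x)) := by
  have hcont : Continuous fun s : ℝ => exp ((t - s) • A) ((A - B) (exp (s • B) x)) :=
    ((continuous_exp_smul A).comp (continuous_const.sub continuous_id)).clm_apply
      (continuous_const.clm_apply ((continuous_exp_smul B).clm_apply continuous_const))
  have hFTC := intervalIntegral.integral_eq_sub_of_hasDerivAt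
    (fun s _ => hasDerivAt_exp_smul_sub_apply_exp_smul_apply A B t s x)
    (hcont.neg.intervalIntegrable 0 t)
  simp only [intervalIntegral.integral_neg, sub_self, zero_smul, exp_zero, sub_zero,
    one_apply_eq_self] at hFTC
  rw [← neg_sub, ← hFTC, neg_neg]

theorem norm_exp_smul_apply_sub_exp_smul_apply_le {A : E →L[ℝ] E} {t : ℝ} (ht : 0 ≤ t)
    (hA : ∀ s ∈ Set.Icc 0 t, ‖exp (s • A)‖ ≤ 1) (B : E →L[ℝ] E) (x : E) :
    ‖exp (t • A) x - exp (t • B) x‖ ≤ ∫ s in 0..t, ‖(A - B) (exp (s • B) x)‖ := by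
  have hcont : Continuous fun s : ℝ => ‖(A - B) (exp (s • B) x)‖ :=
    ((A - B).continuous.comp ((continuous_exp_smul B).clm_apply continuous_const)).norm
  rw [exp_smul_apply_sub_exp_smul_apply_eq_intervalIntegral]
  refine intervalIntegral.norm_integral_le_of_norm_le ht (.of_forall fun s hs => ?_)
    (hcont.intervalIntegrable 0 t)
  calc ‖exp ((t - s) • A) ((A - B) (exp (s • B) x))‖
      ≤ ‖exp ((t - s) • A)‖ * ‖(A - B) (exp (s • B) x)‖ := (exp ((t - s) • A)).le_opNorm _
    _ ≤ ‖(A - B) (exp (s • B) x)‖ :=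
      mul_le_of_le_one_left (norm_nonneg _) (hA _ ⟨by linarith [hs.2], by linarith [hs.1]⟩)

end Duhamel

theorem stmt_1_general
    {X : Type*} [NormedAddCommGroup X] [InnerProductSpace ℝ X] [CompleteSpace X]
    {Y : Type*} [NormedAddCommGroup Y] [InnerProductSpace ℝ Y]
    (A : X →L[ℝ] X) (C : X →L[ℝ] Y) (K : Y →L[ℝ] X)
    (T : ℝ)
    (hcontr : ∀ s ∈ Set.Icc (0 : ℝ) T, ‖exp (s • A)‖ ≤ 1) :
    ∀ x : X, ∀ t ∈ Set.Icc (0 : ℝ) T,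
      ‖C (exp (t • A) x) - C (exp (t • (A - K ∘L C)) x)‖ ≤
        ‖C‖ * ‖K‖ * Real.sqrt t *
          Real.sqrt (∫ s in (0 : ℝ)..t, ‖C (exp (s • (A - K ∘L C)) x)‖ ^ 2) := by
  rintro x t ⟨ht0, htT⟩
  set B := A - K ∘L C
  have hCx : Continuous fun s : ℝ => C (exp (s • B) x) :=
    C.continuous.comp ((continuous_exp_smul B).clm_apply continuous_const)
  have hdiff := norm_exp_smul_apply_sub_exp_smul_apply_le ht0
    (fun s hs => hcontr s ⟨hs.1, hs.2.trans htT⟩) B x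
  rw [sub_sub_cancel] at hdiff
  calc ‖C (exp (t • A) x) - C (exp (t • B) x)‖
      ≤ ‖C‖ * ‖exp (t • A) x - exp (t • B) x‖ := by rw [← map_sub]; exact C.le_opNorm _
    _ ≤ ‖C‖ * ∫ s in 0..t, ‖K‖ * ‖C (exp (s • B) x)‖ := by
      gcongr
      refine hdiff.trans (intervalIntegral.integral_mono_on ht0 ?_ ?_ fun s _ => K.le_opNorm _)
      · exact (K.continuous.comp hCx).norm.intervalIntegrable 0 t
      · exact (continuous_const.mul hCx.norm).intervalIntegrable 0 t
    _ = ‖C‖ * ‖K‖ * ∫ s in 0..t, ‖C (exp (s • B) x)‖ := by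
      rw [intervalIntegral.integral_const_mul, mul_assoc]
    _ ≤ ‖C‖ * ‖K‖ * (√t * √(∫ s in 0..t, ‖C (exp (s • B) x)‖ ^ 2)) := by
      gcongr
      exact intervalIntegral_le_sqrt_mul_sqrt_intervalIntegral_sq ht0 hCx.norm.continuousOn
        fun s _ => norm_nonneg _
    _ = _ := (mul_assoc _ _ _).symm

/-- Pointwise trajectory-difference estimate (key step of Lemma 2.1). -/
theorem stmt_1
    {X : Type*} [NormedAddCommGroup X] [InnerProductSpace ℝ X] [CompleteSpace X]
    {Y : Type*} [NormedAddCommGroup Y] [InnerProductSpace ℝ Y] [CompleteSpace Y]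
    (A : X →L[ℝ] X) (C : X →L[ℝ] Y) (K : Y →L[ℝ] X)
    (T : ℝ) (hT : 0 < T)
    (hcontr : ∀ s ∈ Set.Icc (0 : ℝ) T, ‖exp (s • A)‖ ≤ 1) :
    ∀ x : X, ∀ t ∈ Set.Icc (0 : ℝ) T,
      ‖C (exp (t • A) x) - C (exp (t • (A - K ∘L C)) x)‖ ≤
        ‖C‖ * ‖K‖ * Real.sqrt t *
          Real.sqrt (∫ s in (0 : ℝ)..t, ‖C (exp (s • (A - K ∘L C)) x)‖ ^ 2) :=
  stmt_1_general A C K T hcontr
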